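/- arXiv:1307.1223 — 3 statements merged into one kernel-verified Lean document; each statement's English description precedes it below -/
import Mathlib

section
/- Stability of normalization in L¹: let a < b be real numbers and let f, g : ℝ → ℝ be integrable and nonnegative on [a,b], with ∫_a^b f(s) ds = 1 and s := ∫_a^b g(t) dt > 0. Then ∫_a^b | g(t)/s − f(t) | dt ≤ 2 ∫_a^b | g(t) − f(t) | dt. -/
/-!
Writing `s = ∫ g`, the triangle inequality through `g` splits `‖g / s - f‖₁` into
`‖g / s - g‖₁ + ‖g - f‖₁`. Since `g ≥ 0`, the first term is `|1 / s - 1| * s = |1 - s|`, and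
`|1 - s| = |∫ f - ∫ g| ≤ ‖g - f‖₁` because `∫ f = 1`.
-/

open MeasureTheory Set

section Normalization

variable {α : Type*} [MeasurableSpace α] {μ : Measure α} {f g : α → ℝ}

theorem integral_abs_mul_const_sub_self_of_nonneg (hg0 : 0 ≤ᵐ[μ] g) (c : ℝ) :
    ∫ x, |g x * c - g x| ∂μ = |c - 1| * ∫ x, g x ∂μ := by
  rw [← integral_const_mul]
  refine integral_congr_ae ?_
  filter_upwards [hg0] with x hx
  rw [← mul_sub_one, abs_mul, abs_of_nonneg hx, mul_comm]

theorem abs_integral_sub_integral_le (hf : Integrable f μ) (hg : Integrable g μ) :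
    |∫ x, f x ∂μ - ∫ x, g x ∂μ| ≤ ∫ x, |g x - f x| ∂μ := by
  rw [← integral_sub hf hg]
  refine abs_integral_le_integral_abs.trans_eq (integral_congr_ae ?_)
  exact Filter.Eventually.of_forall fun x => abs_sub_comm (f x) (g x)

theorem integral_abs_div_integral_sub_le (hf : Integrable f μ) (hg : Integrable g μ)
    (hg0 : 0 ≤ᵐ[μ] g) (hf1 : ∫ x, f x ∂μ = 1) (hgpos : 0 < ∫ x, g x ∂μ) :
    ∫ x, |g x / ∫ y, g y ∂μ - f x| ∂μ ≤ 2 * ∫ x, |g x - f x| ∂μ := by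
  set s := ∫ y, g y ∂μ
  have hgs : Integrable (fun x => g x / s) μ := hg.div_const s
  have hrescale_int : Integrable (fun x => |g x / s - g x|) μ := (hgs.sub hg).abs
  have herr_int : Integrable (fun x => |g x - f x|) μ := (hg.sub hf).abs
  have hrescale : ∫ x, |g x / s - g x| ∂μ = |1 - s| := by
    simp only [div_eq_mul_inv]
    rw [integral_abs_mul_const_sub_self_of_nonneg hg0, show s⁻¹ - 1 = (1 - s) / s by field_simp,
      abs_div, abs_of_pos hgpos, div_mul_cancel₀ _ hgpos.ne']
  have hmass : |1 - s| ≤ ∫ x, |g x - f x| ∂μ := hf1 ▸ abs_integral_sub_integral_le hf hg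
  calc ∫ x, |g x / s - f x| ∂μ
      ≤ ∫ x, (|g x / s - g x| + |g x - f x|) ∂μ :=
        integral_mono (hgs.sub hf).abs (hrescale_int.add herr_int) fun x =>
          abs_sub_le (g x / s) (g x) (f x)
    _ = |1 - s| + ∫ x, |g x - f x| ∂μ := by rw [integral_add hrescale_int herr_int, hrescale]
    _ ≤ 2 * ∫ x, |g x - f x| ∂μ := by linarith

end Normalization

open intervalIntegral

theorem normalization_stability_L1_general
    (a b : ℝ) (hab : a < b) (f g : ℝ → ℝ)
    (hf : IntervalIntegrable f volume a b)
    (hg : IntervalIntegrable g volume a b)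
    (hg0 : ∀ t ∈ Set.Icc a b, 0 ≤ g t)
    (hfint : ∫ s in a..b, f s = 1)
    (s : ℝ) (hs : s = ∫ t in a..b, g t) (hspos : 0 < s) :
    (∫ t in a..b, |g t / s - f t|) ≤ 2 * ∫ t in a..b, |g t - f t| := by
  have hg0' : 0 ≤ᵐ[volume.restrict (Ioc a b)] g :=
    ae_restrict_of_forall_mem measurableSet_Ioc fun t ht => hg0 t (Ioc_subset_Icc_self ht)
  rw [intervalIntegrable_iff_integrableOn_Ioc_of_le hab.le] at hf hg
  simp only [integral_of_le hab.le] at hfint hs ⊢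
  subst hs
  exact integral_abs_div_integral_sub_le hf hg hg0' hfint hspos

theorem normalization_stability_L1
    (a b : ℝ) (hab : a < b) (f g : ℝ → ℝ)
    (hf : IntervalIntegrable f volume a b)
    (hg : IntervalIntegrable g volume a b)
    (hf0 : ∀ t ∈ Set.Icc a b, 0 ≤ f t)
    (hg0 : ∀ t ∈ Set.Icc a b, 0 ≤ g t)
    (hfint : ∫ s in a..b, f s = 1)
    (s : ℝ) (hs : s = ∫ t in a..b, g t) (hspos : 0 < s) :
    (∫ t in a..b, |g t / s - f t|) ≤ 2 * ∫ t in a..b, |g t - f t| :=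
  normalization_stability_L1_general a b hab f g hf hg hg0 hfint s hs hspos
end

section
/- Correctness of two-dimensional inverse transform sampling: let a < b and c < d be real numbers, let f : ℝ × ℝ → ℝ be continuous on R = [a,b] × [c,d] with f > 0 on R and ∬_R f = 1. Let f₁(x) = ∫_c^d f(x,y) dy, let F_X(x) = ∫_a^x f₁(s) ds, and let G(x,y) = (∫_c^y f(x,t) dt)/f₁(x). Define Φ : [0,1] × [0,1] → R by Φ(u,v) = (x_u, y_{u,v}), where x_u ∈ [a,b] is the unique solution of F_X(x_u) = u and y_{u,v} ∈ [c,d] is the unique solution of G(x_u, y_{u,v}) = v. Then the pushforward under Φ of the uniform (Lebesgue) probability measure on the unit square [0,1] × [0,1] equals the probability measure on R with density f with respect to two-dimensional Lebesgue measure. -/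
/-!
The sampling map `Φ` inverts the Rosenblatt map `Ψ (x, y) = (F_X x, G x y)`, a continuous
injection of `R` onto the unit square. By Fubini, the `f`-mass of `Ψ ⁻¹' (Iic u ×ˢ Iic v)` is
`min u 1 * min v 1`: for fixed `x` the slice `{y | G x y ≤ v}` is an initial segment of `[c, d]`
of mass `min v 1 * f₁ x`, and likewise `{x | F_X x ≤ u}` is an initial segment of `[a, b]` of
`f₁`-mass `min u 1`. So `Ψ` pushes the `f`-measure to the uniform one, and pushing back along
`Φ` (continuous, as the inverse of a continuous injection on a compact set) recovers it. To have
global continuity and positivity, `f` is first extended off `R` by clamping the coordinates.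
-/

open MeasureTheory intervalIntegral Set
open scoped ENNReal

theorem IsCompact.continuousOn_image_of_leftInvOn {X Y : Type*} [TopologicalSpace X]
    [TopologicalSpace Y] [T2Space Y] {f : X → Y} {s : Set X} (hs : IsCompact s)
    (hf : ContinuousOn f s) {finv : Y → X} (hleft : LeftInvOn finv f s) :
    ContinuousOn finv (f '' s) := by
  refine continuousOn_iff_isClosed.2 fun t ht => ⟨f '' (t ∩ s), ?_, ?_⟩
  · exact ((hs.inter_left ht).image_of_continuousOn (hf.mono inter_subset_right)).isClosed
  · rw [inter_eq_self_of_subset_left (image_mono inter_subset_right), hleft.image_inter']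

theorem ContinuousOn.exists_continuous_extension_Icc_prod {α β Z : Type*}
    [LinearOrder α] [TopologicalSpace α] [OrderTopology α]
    [LinearOrder β] [TopologicalSpace β] [OrderTopology β] [TopologicalSpace Z]
    {f : α × β → Z} {a b : α} {c d : β} (hab : a ≤ b) (hcd : c ≤ d)
    (hf : ContinuousOn f (Icc a b ×ˢ Icc c d)) :
    ∃ g : α × β → Z, Continuous g ∧ EqOn g f (Icc a b ×ˢ Icc c d) ∧
      range g ⊆ f '' (Icc a b ×ˢ Icc c d) := by
  set π : α × β → α × β := fun p => (projIcc a b hab p.1, projIcc c d hcd p.2)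
  have hπ : MapsTo π univ (Icc a b ×ˢ Icc c d) := fun p _ =>
    ⟨(projIcc a b hab p.1).2, (projIcc c d hcd p.2).2⟩
  refine ⟨f ∘ π, hf.comp_continuous (by fun_prop) fun p => hπ (mem_univ p), ?_, ?_⟩
  · rintro ⟨x, y⟩ ⟨hx, hy⟩
    simp [π, projIcc_of_mem hab hx, projIcc_of_mem hcd hy]
  · rintro _ ⟨p, rfl⟩
    exact mem_image_of_mem f (hπ (mem_univ p))

theorem MeasureTheory.Measure.ext_of_Iic_prod_Iic {μ ν : Measure (ℝ × ℝ)}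
    (hμ : ∀ u v, μ (Iic u ×ˢ Iic v) ≠ ∞)
    (h : ∀ u v, μ (Iic u ×ˢ Iic v) = ν (Iic u ×ˢ Iic v)) : μ = ν := by
  have hspan : IsCountablySpanning (range (Iic : ℝ → Set ℝ)) :=
    ⟨fun n : ℕ => Iic (n : ℝ), fun n => mem_range_self _,
      eq_univ_of_forall fun x => mem_iUnion.2 (exists_nat_ge x)⟩
  have hgen : MeasurableSpace.generateFrom (range (Iic : ℝ → Set ℝ)) = Real.measurableSpace :=
    (borel_eq_generateFrom_Iic ℝ).symm.trans BorelSpace.measurable_eq.symm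
  refine ext_of_generateFrom_of_iUnion _ (fun n : ℕ => Iic (n : ℝ) ×ˢ Iic (n : ℝ))
    (generateFrom_eq_prod hgen hgen hspan hspan).symm (isPiSystem_Iic.prod isPiSystem_Iic) ?_
    (fun n => mem_image2_of_mem (mem_range_self _) (mem_range_self _)) (fun n => hμ n n) ?_
  · refine eq_univ_of_forall fun p => mem_iUnion.2 ?_
    obtain ⟨n, hn⟩ := exists_nat_ge (max p.1 p.2)
    exact ⟨n, (le_max_left _ _).trans hn, (le_max_right _ _).trans hn⟩
  · rintro _ ⟨_, ⟨u, rfl⟩, _, ⟨v, rfl⟩, rfl⟩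
    exact h u v

theorem MeasureTheory.Measure.map_restrict_image_eq_of_leftInvOn {X Y : Type*}
    [TopologicalSpace X] [MeasurableSpace X] [BorelSpace X]
    [TopologicalSpace Y] [T2Space Y] [MeasurableSpace Y] [BorelSpace Y]
    {ν : Measure X} {μ : Measure Y} {K : Set X} {Ψ : X → Y} {Φ : Y → X}
    (hK : IsCompact K) (hνK : ∀ᵐ x ∂ν, x ∈ K) (hΨ : Continuous Ψ)
    (hleft : LeftInvOn Φ Ψ K)
    (hmap : ν.map Ψ = μ.restrict (Ψ '' K)) :
    (μ.restrict (Ψ '' K)).map Φ = ν := by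
  have hΦ : AEMeasurable Φ (ν.map Ψ) := hmap ▸
    (hK.continuousOn_image_of_leftInvOn hΨ.continuousOn hleft).aemeasurable
      (hK.image hΨ).isClosed.measurableSet
  rw [← hmap, hΦ.map_map_of_aemeasurable hΨ.aemeasurable,
    Measure.map_congr (f := Φ ∘ Ψ) (g := id) (hνK.mono fun _ hx => hleft hx), Measure.map_id]

theorem strictMono_intervalIntegral_of_pos {h : ℝ → ℝ} (hc : Continuous h)
    (hpos : ∀ x, 0 < h x) (a : ℝ) : StrictMono fun x => ∫ s in a..x, h s := by
  intro x y hxy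
  dsimp only
  have := intervalIntegral_pos_of_pos (hc.intervalIntegrable x y) hpos hxy
  rw [← integral_add_adjacent_intervals (hc.intervalIntegrable a x) (hc.intervalIntegrable x y)]
  linarith

theorem setLIntegral_primitive_le {h : ℝ → ℝ} (hc : Continuous h) (hpos : ∀ x, 0 < h x)
    {a b : ℝ} (hab : a ≤ b) (t : ℝ) :
    ∫⁻ x in {x ∈ Icc a b | ∫ s in a..x, h s ≤ t}, ENNReal.ofReal (h x) =
      ENNReal.ofReal (min t (∫ s in a..b, h s)) := by
  set H : ℝ → ℝ := fun x => ∫ s in a..x, h s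
  have hH : StrictMono H := strictMono_intervalIntegral_of_pos hc hpos a
  rcases lt_or_ge t 0 with ht | ht
  · have hempty : {x ∈ Icc a b | H x ≤ t} = ∅ := by
      refine eq_empty_of_forall_notMem fun x ⟨hx, hHx⟩ => ?_
      have : H a ≤ H x := hH.monotone hx.1
      simp only [H, integral_same] at this
      linarith
    rw [hempty, Measure.restrict_empty, lintegral_zero_measure,
      ENNReal.ofReal_of_nonpos ((min_le_left _ _).trans ht.le)]
  obtain ⟨x₀, hx₀, hHx₀⟩ : min t (H b) ∈ H '' Icc a b :=
    intermediate_value_Icc hab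
      (continuous_primitive (fun _ _ => hc.intervalIntegrable _ _) a).continuousOn
      ⟨le_min (by simpa [H] using ht) (hH.monotone hab), min_le_right _ _⟩
  have hset : {x ∈ Icc a b | H x ≤ t} = Icc a x₀ := by
    ext x
    constructor
    · rintro ⟨hx, hHx⟩
      exact ⟨hx.1, hH.le_iff_le.1 (hHx₀ ▸ le_min hHx (hH.monotone hx.2))⟩
    · intro hx
      exact ⟨⟨hx.1, hx.2.trans hx₀.2⟩,
        (hH.monotone hx.2).trans (hHx₀ ▸ min_le_left _ _)⟩
  rw [hset, ← ofReal_integral_eq_lintegral_ofReal hc.integrableOn_Icc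
    (ae_of_all _ fun x => (hpos x).le), integral_Icc_eq_integral_Ioc,
    ← intervalIntegral.integral_of_le hx₀.1, ← hHx₀]

noncomputable def marginalDensity (g : ℝ × ℝ → ℝ) (c d x : ℝ) : ℝ :=
  ∫ y in c..d, g (x, y)

noncomputable def marginalCDF (g : ℝ × ℝ → ℝ) (a c d x : ℝ) : ℝ :=
  ∫ s in a..x, marginalDensity g c d s

noncomputable def conditionalCDF (g : ℝ × ℝ → ℝ) (c d x y : ℝ) : ℝ :=
  (∫ t in c..y, g (x, t)) / marginalDensity g c d x

noncomputable def rosenblatt (g : ℝ × ℝ → ℝ) (a c d : ℝ) (p : ℝ × ℝ) : ℝ × ℝ :=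
  (marginalCDF g a c d p.1, conditionalCDF g c d p.1 p.2)

section Rosenblatt

variable {f g : ℝ × ℝ → ℝ} {a b c d : ℝ}

theorem intervalIntegral_slice_congr (h : EqOn f g (Icc a b ×ˢ Icc c d)) {x y : ℝ}
    (hx : x ∈ Icc a b) (hy : y ∈ Icc c d) : ∫ t in c..y, f (x, t) = ∫ t in c..y, g (x, t) :=
  integral_congr fun _ ht => h ⟨hx, Icc_subset_Icc_right hy.2 (uIcc_of_le hy.1 ▸ ht)⟩

theorem rosenblatt_eqOn (h : EqOn f g (Icc a b ×ˢ Icc c d)) (hcd : c ≤ d) :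
    EqOn (rosenblatt f a c d) (rosenblatt g a c d) (Icc a b ×ˢ Icc c d) := by
  have hm : EqOn (marginalDensity f c d) (marginalDensity g c d) (Icc a b) := fun x hx =>
    intervalIntegral_slice_congr h hx (right_mem_Icc.2 hcd)
  rintro ⟨x, y⟩ ⟨hx, hy⟩
  refine Prod.ext (integral_congr fun s hs => hm ?_) ?_
  · rw [uIcc_of_le hx.1] at hs
    exact ⟨hs.1, hs.2.trans hx.2⟩
  · simp only [rosenblatt, conditionalCDF, intervalIntegral_slice_congr h hx hy, hm hx]

theorem marginalDensity_pos (hg : Continuous g) (hpos : ∀ p, 0 < g p) (hcd : c < d) (x : ℝ) :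
    0 < marginalDensity g c d x :=
  intervalIntegral_pos_of_pos
    ((by fun_prop : Continuous fun y => g (x, y)).intervalIntegrable c d) (fun y => hpos (x, y)) hcd

theorem continuous_marginalDensity (hg : Continuous g) : Continuous (marginalDensity g c d) :=
  continuous_parametric_intervalIntegral_of_continuous' (f := fun x y => g (x, y)) hg c d

theorem continuous_marginalCDF (hg : Continuous g) : Continuous (marginalCDF g a c d) :=
  continuous_primitive (fun _ _ => (continuous_marginalDensity hg).intervalIntegrable _ _) a

theorem strictMono_marginalCDF (hg : Continuous g) (hpos : ∀ p, 0 < g p) (hcd : c < d) :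
    StrictMono (marginalCDF g a c d) :=
  strictMono_intervalIntegral_of_pos (continuous_marginalDensity hg)
    (marginalDensity_pos hg hpos hcd) a

theorem continuous_conditionalCDF (hg : Continuous g) (hpos : ∀ p, 0 < g p) (hcd : c < d) :
    Continuous fun p : ℝ × ℝ => conditionalCDF g c d p.1 p.2 :=
  (continuous_parametric_primitive_of_continuous (f := fun x y => g (x, y)) hg).div
    ((continuous_marginalDensity hg).comp continuous_fst)
    fun p => (marginalDensity_pos hg hpos hcd p.1).ne'

theorem strictMono_conditionalCDF (hg : Continuous g) (hpos : ∀ p, 0 < g p) (hcd : c < d)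
    (x : ℝ) : StrictMono (conditionalCDF g c d x) :=
  (strictMono_intervalIntegral_of_pos (by fun_prop) (fun y => hpos (x, y)) c).div_const
    (marginalDensity_pos hg hpos hcd x)

theorem conditionalCDF_le_iff (hg : Continuous g) (hpos : ∀ p, 0 < g p) (hcd : c < d)
    {x y v : ℝ} :
    conditionalCDF g c d x y ≤ v ↔ ∫ t in c..y, g (x, t) ≤ v * marginalDensity g c d x :=
  div_le_iff₀ (marginalDensity_pos hg hpos hcd x)

theorem rosenblatt_injective (hg : Continuous g) (hpos : ∀ p, 0 < g p) (hcd : c < d) :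
    Function.Injective (rosenblatt g a c d) := by
  rintro ⟨x, y⟩ ⟨x', y'⟩ h
  obtain rfl : x = x' := (strictMono_marginalCDF hg hpos hcd).injective (congrArg Prod.fst h)
  exact Prod.ext rfl ((strictMono_conditionalCDF hg hpos hcd x).injective (congrArg Prod.snd h))

theorem continuous_rosenblatt (hg : Continuous g) (hpos : ∀ p, 0 < g p) (hcd : c < d) :
    Continuous (rosenblatt g a c d) :=
  ((continuous_marginalCDF hg).comp continuous_fst).prodMk (continuous_conditionalCDF hg hpos hcd)

theorem mapsTo_rosenblatt (hg : Continuous g) (hpos : ∀ p, 0 < g p) (hcd : c < d)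
    (hmass : marginalCDF g a c d b = 1) :
    MapsTo (rosenblatt g a c d) (Icc a b ×ˢ Icc c d) (Icc 0 1 ×ˢ Icc 0 1) := by
  rintro ⟨x, y⟩ ⟨hx, hy⟩
  have hF := (strictMono_marginalCDF hg hpos hcd (a := a)).monotone
  have hC := (strictMono_conditionalCDF hg hpos hcd x).monotone
  refine ⟨⟨?_, hmass ▸ hF hx.2⟩, ⟨?_, ?_⟩⟩
  · simpa [rosenblatt, marginalCDF] using hF hx.1
  · simpa [rosenblatt, conditionalCDF] using hC hy.1
  · exact (hC hy.2).trans_eq (div_self (marginalDensity_pos hg hpos hcd x).ne')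

theorem marginalCDF_eq_setIntegral (hg : Continuous g) (hab : a ≤ b) (hcd : c ≤ d) :
    marginalCDF g a c d b = ∫ p in Icc a b ×ˢ Icc c d, g p := by
  rw [Measure.volume_eq_prod, setIntegral_prod _ (hg.continuousOn.integrableOn_compact
    (isCompact_Icc.prod isCompact_Icc)), marginalCDF, integral_of_le hab,
    ← integral_Icc_eq_integral_Ioc]
  refine setIntegral_congr_fun measurableSet_Icc fun x _ => ?_
  rw [marginalDensity, integral_of_le hcd, integral_Icc_eq_integral_Ioc]

theorem setLIntegral_rosenblatt_preimage_Iic_prod_Iic (hg : Continuous g) (hpos : ∀ p, 0 < g p)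
    (hab : a ≤ b) (hcd : c < d) (u v : ℝ) :
    ∫⁻ p in rosenblatt g a c d ⁻¹' (Iic u ×ˢ Iic v) ∩ Icc a b ×ˢ Icc c d,
        ENNReal.ofReal (g p) =
      ENNReal.ofReal (min u (marginalCDF g a c d b)) * ENNReal.ofReal (min v 1) := by
  set W := rosenblatt g a c d ⁻¹' (Iic u ×ˢ Iic v) ∩ Icc a b ×ˢ Icc c d
  set A := {x ∈ Icc a b | marginalCDF g a c d x ≤ u}
  have hW : MeasurableSet W :=
    ((measurableSet_Iic.prod measurableSet_Iic).preimage
      (continuous_rosenblatt hg hpos hcd).measurable).inter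
      (measurableSet_Icc.prod measurableSet_Icc)
  have hA : MeasurableSet A := measurableSet_Icc.inter
    (measurableSet_le (continuous_marginalCDF hg).measurable measurable_const)
  have hslice : ∀ x, ∫⁻ y, W.indicator (fun p => ENNReal.ofReal (g p)) (x, y) =
      A.indicator (fun x => ENNReal.ofReal (min v 1 * marginalDensity g c d x)) x := by
    intro x
    have hWx : ∫⁻ y, W.indicator (fun p => ENNReal.ofReal (g p)) (x, y) =
        ∫⁻ y in Prod.mk x ⁻¹' W, ENNReal.ofReal (g (x, y)) :=
      lintegral_indicator (measurable_prodMk_left hW) _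
    by_cases hx : x ∈ A
    · have hm := marginalDensity_pos hg hpos hcd x
      have hslice_eq : Prod.mk x ⁻¹' W =
          {y ∈ Icc c d | ∫ t in c..y, g (x, t) ≤ v * marginalDensity g c d x} := by
        ext y
        simp only [W, mem_preimage, mem_inter_iff, mem_prod, mem_Iic, rosenblatt,
          conditionalCDF_le_iff hg hpos hcd]
        exact ⟨fun h => ⟨h.2.2, h.1.2⟩, fun h => ⟨⟨hx.2, h.2⟩, hx.1, h.1⟩⟩
      rw [hWx, hslice_eq, indicator_of_mem hx, min_mul_of_nonneg _ _ hm.le, one_mul]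
      exact setLIntegral_primitive_le (by fun_prop) (fun y => hpos (x, y)) hcd.le _
    · have hslice_eq : Prod.mk x ⁻¹' W = ∅ :=
        eq_empty_of_forall_notMem fun y hy => hx ⟨hy.2.1, hy.1.1⟩
      rw [hWx, hslice_eq, indicator_of_notMem hx, Measure.restrict_empty, lintegral_zero_measure]
  rw [← lintegral_indicator hW, Measure.volume_eq_prod,
    lintegral_prod _ (hg.measurable.ennreal_ofReal.indicator hW).aemeasurable,
    lintegral_congr hslice, lintegral_indicator hA, mul_comm]
  simp_rw [ENNReal.ofReal_mul' (marginalDensity_pos hg hpos hcd _).le]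
  rw [lintegral_const_mul _ (continuous_marginalDensity hg).measurable.ennreal_ofReal]
  congr 1
  exact setLIntegral_primitive_le (continuous_marginalDensity hg)
    (marginalDensity_pos hg hpos hcd) hab u

theorem map_rosenblatt_withDensity (hg : Continuous g) (hpos : ∀ p, 0 < g p) (hab : a ≤ b)
    (hcd : c < d) (hmass : marginalCDF g a c d b = 1) :
    (((volume : Measure (ℝ × ℝ)).restrict (Icc a b ×ˢ Icc c d)).withDensity
        fun p => ENNReal.ofReal (g p)).map (rosenblatt g a c d) =
      (volume : Measure (ℝ × ℝ)).restrict (Icc (0 : ℝ) 1 ×ˢ Icc (0 : ℝ) 1) := by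
  have hbox : ∀ u v : ℝ,
      volume.restrict (Icc (0 : ℝ) 1 ×ˢ Icc (0 : ℝ) 1) (Iic u ×ˢ Iic v) =
        ENNReal.ofReal (min u 1) * ENNReal.ofReal (min v 1) := by
    intro u v
    have hIcc : ∀ w : ℝ, Iic w ∩ Icc 0 1 = Icc 0 (min w 1) := fun w => by
      ext; simp only [mem_inter_iff, mem_Iic, mem_Icc, le_min_iff]; tauto
    rw [Measure.restrict_apply (measurableSet_Iic.prod measurableSet_Iic), prod_inter_prod,
      hIcc, hIcc, Measure.volume_eq_prod, Measure.prod_prod, Real.volume_Icc, Real.volume_Icc,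
      sub_zero, sub_zero]
  refine (Measure.ext_of_Iic_prod_Iic (fun u v => by rw [hbox]; finiteness) fun u v => ?_).symm
  have hrect : MeasurableSet (Iic u ×ˢ Iic v) := measurableSet_Iic.prod measurableSet_Iic
  have hΨ := (continuous_rosenblatt hg hpos hcd (a := a)).measurable
  rw [hbox, Measure.map_apply hΨ hrect, withDensity_apply _ (hrect.preimage hΨ),
    Measure.restrict_restrict (hrect.preimage hΨ),
    setLIntegral_rosenblatt_preimage_Iic_prod_Iic hg hpos hab hcd, hmass]

end Rosenblatt

theorem inverse_transform_sampling_correct_2d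
    (a b c d : ℝ) (hab : a < b) (hcd : c < d) (f : ℝ × ℝ → ℝ)
    (hf : ContinuousOn f (Set.Icc a b ×ˢ Set.Icc c d))
    (hpos : ∀ p ∈ Set.Icc a b ×ˢ Set.Icc c d, 0 < f p)
    (hint : ∫ p in Set.Icc a b ×ˢ Set.Icc c d, f p = 1)
    (f₁ : ℝ → ℝ) (hf₁ : ∀ x, f₁ x = ∫ y in c..d, f (x, y))
    (FX : ℝ → ℝ) (hFX : ∀ x, FX x = ∫ s in a..x, f₁ s)
    (G : ℝ → ℝ → ℝ) (hG : ∀ x y, G x y = (∫ t in c..y, f (x, t)) / f₁ x)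
    (Φ : ℝ × ℝ → ℝ × ℝ)
    (hΦ : ∀ u v : ℝ, (u, v) ∈ Set.Icc (0:ℝ) 1 ×ˢ Set.Icc (0:ℝ) 1 →
      Φ (u, v) ∈ Set.Icc a b ×ˢ Set.Icc c d ∧
        FX (Φ (u, v)).1 = u ∧ G (Φ (u, v)).1 (Φ (u, v)).2 = v) :
    Measure.map Φ ((volume : Measure (ℝ × ℝ)).restrict
        (Set.Icc (0:ℝ) 1 ×ˢ Set.Icc (0:ℝ) 1)) =
      ((volume : Measure (ℝ × ℝ)).restrict
        (Set.Icc a b ×ˢ Set.Icc c d)).withDensity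
          (fun p => ENNReal.ofReal (f p)) := by
  set R := Icc a b ×ˢ Icc c d
  have hR : MeasurableSet R := measurableSet_Icc.prod measurableSet_Icc
  obtain ⟨g, hg, hgf, hg_range⟩ := hf.exists_continuous_extension_Icc_prod hab.le hcd.le
  have hg_pos : ∀ p, 0 < g p := fun p => by
    obtain ⟨q, hq, hqp⟩ := hg_range (mem_range_self p)
    exact hqp ▸ hpos q hq
  have hmass : marginalCDF g a c d b = 1 := by
    rw [marginalCDF_eq_setIntegral hg hab.le hcd.le, setIntegral_congr_fun hR hgf, hint]
  obtain rfl : f₁ = marginalDensity f c d := funext hf₁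
  have hrightInv : ∀ p ∈ Icc (0 : ℝ) 1 ×ˢ Icc (0 : ℝ) 1,
      Φ p ∈ R ∧ rosenblatt g a c d (Φ p) = p := by
    rintro ⟨u, v⟩ hp
    obtain ⟨hΦR, hFX_u, hG_v⟩ := hΦ u v hp
    refine ⟨hΦR, ?_⟩
    rw [← rosenblatt_eqOn hgf.symm hcd.le hΦR]
    exact Prod.ext ((hFX _).symm.trans hFX_u) ((hG _ _).symm.trans hG_v)
  have himage : rosenblatt g a c d '' R = Icc (0 : ℝ) 1 ×ˢ Icc (0 : ℝ) 1 :=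
    (mapsTo_rosenblatt hg hg_pos hcd hmass).image_subset.antisymm fun p hp =>
      ⟨Φ p, (hrightInv p hp).1, (hrightInv p hp).2⟩
  have hleft : LeftInvOn Φ (rosenblatt g a c d) R := fun p hp =>
    rosenblatt_injective hg hg_pos hcd (hrightInv _ (himage ▸ mem_image_of_mem _ hp)).2
  rw [withDensity_congr_ae (g := fun p => ENNReal.ofReal (g p))
    ((ae_restrict_mem hR).mono fun _ hp => congrArg ENNReal.ofReal (hgf hp).symm), ← himage]
  exact Measure.map_restrict_image_eq_of_leftInvOn (isCompact_Icc.prod isCompact_Icc)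
    ((withDensity_absolutelyContinuous _ _).ae_le (ae_restrict_mem hR))
    (continuous_rosenblatt hg hg_pos hcd) hleft
    (himage ▸ map_rosenblatt_withDensity hg hg_pos hab.le hcd hmass)
end

section
/- Chebyshev coefficient formula from grid values: let n ≥ 1 be an integer, let α_0, …, α_n be real numbers, and let p : ℝ → ℝ be p(x) = Σ_{k=0}^n α_k T_k(x), where T_k is the degree-k Chebyshev polynomial of the first kind. Define weights w_0 = w_n = 1/2, w_j = 1 for 0 < j < n, and scaling constants c_0 = c_n = 2, c_k = 1 for 0 < k < n. Then for every integer k with 0 ≤ k ≤ n: α_k = (2/(n·c_k)) · Σ_{j=0}^{n} w_j · p(cos(jπ/n)) · cos(kjπ/n). -/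
open Real Finset Polynomial Polynomial.Chebyshev

/-!
At the nodes `x_j = jπ/n` one has `T_l (cos x_j) = cos (l x_j)`, so the formula is the discrete
orthogonality of `cos (l x_j)` and `cos (k x_j)` for the trapezoidal weights. By product-to-sum
this reduces to `∑ w_j cos (j m π / n)`, which is `n` when `2n ∣ m` (every term is `w_j`) and `0`
otherwise: after multiplication by `sin (x / 2)` the trapezoidal sum of `cos (j x)` telescopes
to `sin (n x) cos (x / 2) / 2`, and `sin (n x) = sin (m π) = 0` while `sin (x / 2) ≠ 0`.
-/

noncomputable def trapezoidWeight (n j : ℕ) : ℝ := if j = 0 ∨ j = n then 1 / 2 else 1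

theorem sum_trapezoidWeight_mul {n : ℕ} (hn : 1 ≤ n) (f : ℕ → ℝ) :
    ∑ j ∈ range (n + 1), trapezoidWeight n j * f j = ∑ j ∈ range n, (f j + f (j + 1)) / 2 := by
  obtain ⟨m, rfl⟩ : ∃ m, n = m + 1 := ⟨n - 1, by omega⟩
  have interior : ∀ i ∈ range m, trapezoidWeight (m + 1) (i + 1) * f (i + 1) = f (i + 1) := by
    intro i hi
    simp only [trapezoidWeight, mem_range] at hi ⊢
    rw [if_neg (by omega), one_mul]
  rw [sum_range_succ, sum_range_succ', sum_congr rfl interior, ← sum_div, sum_add_distrib,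
    sum_range_succ' (fun j => f j), sum_range_succ (fun j => f (j + 1))]
  simp only [trapezoidWeight, true_or, or_true, if_true]
  ring

theorem sin_half_mul_sum_range_cos_add_cos (x : ℝ) (n : ℕ) :
    sin (x / 2) * ∑ j ∈ range n, (cos (j * x) + cos (((j + 1 : ℕ) : ℝ) * x)) =
      sin (n * x) * cos (x / 2) := by
  -- both sides equal `2 sin (x/2) cos (x/2) cos ((j + 1/2) x)`
  have term : ∀ j : ℕ, sin (x / 2) * (cos (j * x) + cos (((j + 1 : ℕ) : ℝ) * x)) =
      (sin ((j + 1 : ℕ) * x) - sin (j * x)) * cos (x / 2) := by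
    intro j
    have hlo : (j : ℝ) * x = (j + 1 / 2) * x - x / 2 := by ring
    have hhi : ((j + 1 : ℕ) : ℝ) * x = (j + 1 / 2) * x + x / 2 := by push_cast; ring
    rw [hhi, hlo]
    simp only [cos_add, cos_sub, sin_add, sin_sub]
    ring
  rw [mul_sum, sum_congr rfl fun j _ => term j, ← sum_mul, sum_range_sub (fun j => sin (j * x)),
    Nat.cast_zero, zero_mul, sin_zero, sub_zero]

theorem sum_trapezoidWeight_mul_cos_int_mul {n : ℕ} (hn : 1 ≤ n) (m : ℤ) :
    ∑ j ∈ range (n + 1), trapezoidWeight n j * cos (j * (m * π / n)) =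
      if 2 * (n : ℤ) ∣ m then (n : ℝ) else 0 := by
  have hn0 : (n : ℝ) ≠ 0 := by positivity
  rw [sum_trapezoidWeight_mul hn]
  split_ifs with hdvd
  · obtain ⟨t, rfl⟩ := hdvd
    have grid_one : ∀ j : ℕ, cos (j * (((2 * n * t : ℤ) : ℝ) * π / n)) = 1 := fun j => by
      rw [show (j : ℝ) * (((2 * n * t : ℤ) : ℝ) * π / n) = ((j * t : ℤ) : ℝ) * (2 * π) by
        push_cast; field_simp]
      exact cos_int_mul_two_pi _
    simp only [grid_one]
    simp
  · set x : ℝ := m * π / n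
    have hsin_half : sin (x / 2) ≠ 0 := by
      rw [Ne, sin_eq_zero_iff]
      rintro ⟨t, ht⟩
      refine hdvd ⟨t, ?_⟩
      have : (m : ℝ) = 2 * n * t := by
        simp only [x] at ht
        field_simp at ht
        linarith
      exact_mod_cast this
    have hsin : sin (n * x) = 0 := by
      rw [show (n : ℝ) * x = m * π by simp only [x]; field_simp]
      exact sin_int_mul_pi m
    have key := sin_half_mul_sum_range_cos_add_cos x n
    rw [hsin, zero_mul] at key
    rw [← sum_div, (mul_eq_zero.mp key).resolve_left hsin_half, zero_div]

theorem sum_trapezoidWeight_mul_cos_mul_cos {n k l : ℕ} (hn : 1 ≤ n) (hk : k ≤ n) (hl : l ≤ n) :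
    ∑ j ∈ range (n + 1), trapezoidWeight n j * (cos (l * j * π / n) * cos (k * j * π / n)) =
      if l = k then (if k = 0 ∨ k = n then (n : ℝ) else n / 2) else 0 := by
  have product_to_sum : ∀ j : ℕ, cos (l * j * π / n) * cos (k * j * π / n) =
      (cos (j * (((l + k : ℤ) : ℝ) * π / n)) + cos (j * (((l - k : ℤ) : ℝ) * π / n))) / 2 := by
    intro j
    rw [cos_add_cos]
    push_cast
    ring_nf
  have dvd_add_iff : 2 * (n : ℤ) ∣ l + k ↔ l = k ∧ (k = 0 ∨ k = n) := by
    constructor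
    · intro hdvd
      rcases lt_or_eq_of_le (show (l + k : ℤ) ≤ 2 * n by omega) with hlt | heq
      · have := Int.eq_zero_of_abs_lt_dvd hdvd (by rw [abs_lt]; omega)
        omega
      · omega
    · rintro ⟨rfl, rfl | rfl⟩
      · simp
      · exact ⟨1, by ring⟩
  have dvd_sub_iff : 2 * (n : ℤ) ∣ l - k ↔ l = k := by
    constructor
    · intro hdvd
      have := Int.eq_zero_of_abs_lt_dvd hdvd (by rw [abs_lt]; omega)
      omega
    · rintro rfl
      simp
  calc ∑ j ∈ range (n + 1), trapezoidWeight n j * (cos (l * j * π / n) * cos (k * j * π / n))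
      _ = (∑ j ∈ range (n + 1), trapezoidWeight n j * cos (j * (((l + k : ℤ) : ℝ) * π / n)) +
          ∑ j ∈ range (n + 1), trapezoidWeight n j * cos (j * (((l - k : ℤ) : ℝ) * π / n))) /
            2 := by
        rw [← sum_add_distrib, sum_div]
        exact sum_congr rfl fun j _ => by rw [product_to_sum]; ring
      _ = ((if l = k ∧ (k = 0 ∨ k = n) then (n : ℝ) else 0) +
            (if l = k then (n : ℝ) else 0)) / 2 := by
        simp only [sum_trapezoidWeight_mul_cos_int_mul hn, dvd_add_iff, dvd_sub_iff]
      _ = if l = k then (if k = 0 ∨ k = n then (n : ℝ) else n / 2) else 0 := by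
        split_ifs <;> simp_all

theorem chebyshev_coefficients_from_grid_values
    (n : ℕ) (hn : 1 ≤ n) (α : ℕ → ℝ) (p : ℝ → ℝ)
    (hp : ∀ x : ℝ, p x = ∑ k ∈ Finset.range (n + 1), α k * (T ℝ k).eval x)
    (w : ℕ → ℝ) (hw : ∀ j ≤ n, w j = if j = 0 ∨ j = n then 1/2 else 1)
    (c : ℕ → ℝ) (hc : ∀ k ≤ n, c k = if k = 0 ∨ k = n then 2 else 1) :
    ∀ k ≤ n,
      α k = (2 / (n * c k)) *
        ∑ j ∈ Finset.range (n + 1),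
          w j * p (Real.cos (j * π / n)) * Real.cos (k * j * π / n) := by
  intro k hk
  have T_eval_node : ∀ l j : ℕ, (T ℝ l).eval (cos (j * π / n)) = cos (l * j * π / n) := by
    intro l j
    rw [T_real_cos, Int.cast_natCast]
    ring_nf
  have sample_sum : ∑ j ∈ range (n + 1), w j * p (cos (j * π / n)) * cos (k * j * π / n) =
      ∑ l ∈ range (n + 1), α l *
        ∑ j ∈ range (n + 1), trapezoidWeight n j * (cos (l * j * π / n) * cos (k * j * π / n)) := by
    simp_rw [mul_sum]
    rw [sum_comm]
    refine sum_congr rfl fun j hj => ?_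
    rw [hw j (Nat.lt_succ_iff.mp (mem_range.mp hj)), hp, mul_sum, sum_mul]
    refine sum_congr rfl fun l _ => ?_
    rw [T_eval_node, trapezoidWeight]
    ring
  rw [sample_sum, sum_congr rfl fun l hl => by
      rw [sum_trapezoidWeight_mul_cos_mul_cos hn hk (Nat.lt_succ_iff.mp (mem_range.mp hl))],
    hc k hk]
  simp only [mul_ite, mul_zero, sum_ite_eq', mem_range, Nat.lt_succ_of_le hk, if_true]
  split_ifs <;> field_simp
end
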